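/- arXiv:math/0008098 — 3 statements merged into one kernel-verified Lean document; each statement's English description precedes it below -/
import Mathlib

section
/- For finite nonempty subsets A, B of an abelian group, |A - B| ≤ |A + B|^3 / (|A| · |B|). -/
open Finset Pointwise

/- Ruzsa's triangle inequality bounds `|A - B| |B|` by `|A + B| |B + B|`, and its sumset form
(a consequence of Plünnecke's inequality) bounds `|B + B| |A|` by `|A + B|²`. -/

theorem Finset.card_sub_mul_card_mul_card_le_card_add_pow_three {G : Type*} [AddCommGroup G]
    [DecidableEq G] (A B : Finset G) : #(A - B) * (#A * #B) ≤ #(A + B) ^ 3 := by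
  have hsub : #(A - B) * #B ≤ #(A + B) * #(B + B) := ruzsa_triangle_inequality_sub_add_add A B B
  have hdouble : #(B + B) * #A ≤ #(A + B) * #(A + B) := by
    simpa only [add_comm B A] using ruzsa_triangle_inequality_add_add_add B A B
  calc #(A - B) * (#A * #B) = #(A - B) * #B * #A := by ring
    _ ≤ #(A + B) * #(B + B) * #A := by gcongr
    _ = #(A + B) * (#(B + B) * #A) := by ring
    _ ≤ #(A + B) * (#(A + B) * #(A + B)) := by gcongr
    _ = #(A + B) ^ 3 := by ring

theorem ruzsa_sum_difference {G : Type*} [AddCommGroup G] [DecidableEq G]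
    (A B : Finset G) (hA : A.Nonempty) (hB : B.Nonempty) :
    ((A - B).card : ℝ) ≤ ((A + B).card : ℝ) ^ 3 / ((A.card : ℝ) * (B.card : ℝ)) := by
  have hA0 : (0 : ℝ) < #A := by exact_mod_cast hA.card_pos
  have hB0 : (0 : ℝ) < #B := by exact_mod_cast hB.card_pos
  rw [le_div_iff₀ (mul_pos hA0 hB0)]
  exact_mod_cast card_sub_mul_card_mul_card_le_card_add_pow_three A B
end

section
/- For finite nonempty subsets A, B of an abelian group, if |A + B| ≤ K·|A|^{1/2}·|B|^{1/2}, then |A - B| ≤ K^3 · |A|^{1/2} · |B|^{1/2}. -/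
/-!
Ruzsa's triangle inequality gives `|A - B| |B| ≤ |A + B| |B + B|` and the Plünnecke–Ruzsa
inequality gives `|B + B| |A| ≤ |A + B|²`, so `|A - B| |A| |B| ≤ |A + B|³`. Inserting the
hypothesis `|A + B| ≤ K √(|A| |B|)` and dividing by `|A| |B|` gives the claim.
-/

open Pointwise

namespace Finset

variable {G : Type*} [AddCommGroup G] [DecidableEq G] {A : Finset G}

theorem card_add_self_mul_card_le_card_add_sq (hA : A.Nonempty) (B : Finset G) :
    #(B + B) * #A ≤ #(A + B) ^ 2 := by
  have hA' : (0 : ℚ≥0) < #A := by exact_mod_cast hA.card_pos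
  have hPR : (#(B + B) : ℚ≥0) ≤ (#(A + B) / #A) ^ 2 * #A := by
    simpa only [two_nsmul] using pluennecke_ruzsa_inequality_nsmul_add hA B 2
  have hQ : (#(B + B) * #A : ℚ≥0) ≤ #(A + B) ^ 2 := by
    calc (#(B + B) * #A : ℚ≥0) ≤ (#(A + B) / #A) ^ 2 * #A * #A := by gcongr
      _ = #(A + B) ^ 2 := by field_simp
  exact_mod_cast hQ

theorem card_sub_mul_card_mul_card_le_card_add_pow_three_s1 (hA : A.Nonempty) (B : Finset G) :
    #(A - B) * #A * #B ≤ #(A + B) ^ 3 :=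
  calc #(A - B) * #A * #B = #(A - B) * #B * #A := by ring
    _ ≤ #(A + B) * #(B + B) * #A := Nat.mul_le_mul_right _ (ruzsa_triangle_inequality_sub_add_add A B B)
    _ ≤ #(A + B) * #(A + B) ^ 2 := by
      rw [mul_assoc]; gcongr; exact card_add_self_mul_card_le_card_add_sq hA B
    _ = #(A + B) ^ 3 := by ring

end Finset

theorem ruzsa_triangle_reformulation_general {G : Type*} [AddCommGroup G] [DecidableEq G]
    (A B : Finset G) (hA : A.Nonempty) (hB : B.Nonempty) (K : ℝ)
    (h : ((A + B).card : ℝ) ≤ K * (A.card : ℝ) ^ ((1 : ℝ)/2) * (B.card : ℝ) ^ ((1 : ℝ)/2)) :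
    ((A - B).card : ℝ) ≤ K ^ 3 * (A.card : ℝ) ^ ((1 : ℝ)/2) * (B.card : ℝ) ^ ((1 : ℝ)/2) := by
  simp only [← Real.sqrt_eq_rpow] at h ⊢
  set a := √(A.card : ℝ)
  set b := √(B.card : ℝ)
  have ha : 0 < a := Real.sqrt_pos.2 (by exact_mod_cast hA.card_pos)
  have hb : 0 < b := Real.sqrt_pos.2 (by exact_mod_cast hB.card_pos)
  have hPR : ((A - B).card : ℝ) * a ^ 2 * b ^ 2 ≤ ((A + B).card : ℝ) ^ 3 := by
    rw [Real.sq_sqrt (Nat.cast_nonneg _), Real.sq_sqrt (Nat.cast_nonneg _)]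
    exact_mod_cast Finset.card_sub_mul_card_mul_card_le_card_add_pow_three_s1 hA B
  have hcube : ((A + B).card : ℝ) ^ 3 ≤ (K * a * b) ^ 3 := by gcongr
  have hab : 0 < a ^ 2 * b ^ 2 := by positivity
  refine le_of_mul_le_mul_right ?_ hab
  linarith [hPR.trans hcube]

theorem ruzsa_triangle_reformulation {G : Type*} [AddCommGroup G] [DecidableEq G]
    (A B : Finset G) (hA : A.Nonempty) (hB : B.Nonempty) (K : ℝ) (hK : 0 < K)
    (h : ((A + B).card : ℝ) ≤ K * (A.card : ℝ) ^ ((1 : ℝ)/2) * (B.card : ℝ) ^ ((1 : ℝ)/2)) :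
    ((A - B).card : ℝ) ≤ K ^ 3 * (A.card : ℝ) ^ ((1 : ℝ)/2) * (B.card : ℝ) ^ ((1 : ℝ)/2) :=
  ruzsa_triangle_reformulation_general A B hA hB K h
end

section
/- Two axis-transverse rectangles (tubes) in ℝ² of dimensions 1 × δ whose long axes make an angle θ with 0 < δ ≤ θ ≤ π/2 intersect in a set of area at most C·δ²/θ for an absolute constant C. -/
open MeasureTheory

/-- The `δ`-neighborhood of the unit segment starting at `x` in direction `ω`:
a `1 × δ` tube in the plane. -/
def planeTube (x ω : EuclideanSpace ℝ (Fin 2)) (δ : ℝ) : Set (EuclideanSpace ℝ (Fin 2)) :=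
  {y | ∃ t : ℝ, t ∈ Set.Icc (0 : ℝ) 1 ∧ dist y (x + t • ω) ≤ δ}

/-!
Each tube lies in the slab of half-width `δ` around its axis, and the two slabs meet in a
parallelogram: the preimage of a square of side `2δ` under the linear map whose rows are the
unit normals of the tubes. That map has determinant `± sin θ`, so the intersection has area at
most `4δ² / sin θ`, and Jordan's inequality `sin θ ≥ 2θ/π` turns this into `2π δ² / θ`.
-/

open Real InnerProductGeometry RealInnerProductSpace

theorem volume_setOf_abs_inner_sub_le {ι : Type*} [Fintype ι] [DecidableEq ι]
    (n : ι → EuclideanSpace ℝ ι) (hn : (Matrix.of fun i j => n i j).det ≠ 0) (a r : ι → ℝ) :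
    volume {y : EuclideanSpace ℝ ι | ∀ i, |⟪n i, y⟫ - a i| ≤ r i} =
      ENNReal.ofReal |(Matrix.of fun i j => n i j).det|⁻¹ * ∏ i, ENNReal.ofReal (2 * r i) := by
  set M : Matrix ι ι ℝ := Matrix.of fun i j => n i j
  set box : Set (ι → ℝ) := Set.univ.pi fun i => Set.Icc (a i - r i) (a i + r i)
  have hset : {y : EuclideanSpace ℝ ι | ∀ i, |⟪n i, y⟫ - a i| ≤ r i} =
      WithLp.ofLp ⁻¹' (Matrix.toLin' M ⁻¹' box) := by
    ext y
    simp only [Set.mem_ofPred_eq, Set.mem_preimage, Matrix.toLin'_apply, box, Set.mem_univ_pi,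
      Set.mem_Icc, abs_sub_le_iff, PiLp.inner_apply, RCLike.inner_apply, conj_trivial,
      Matrix.mulVec, dotProduct, M, Matrix.of_apply, mul_comm (y _)]
    grind
  have hbox : MeasurableSet (Matrix.toLin' M ⁻¹' box) :=
    (MeasurableSet.univ_pi fun i => measurableSet_Icc).preimage
      (LinearMap.continuous_of_finiteDimensional _).measurable
  rw [hset, (PiLp.volume_preserving_ofLp ι).measure_preimage hbox.nullMeasurableSet,
    Measure.addHaar_preimage_linearMap _ (by rwa [LinearMap.det_toLin']), LinearMap.det_toLin',
    volume_pi_pi]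
  congr 1
  · rw [abs_inv]
  · refine Finset.prod_congr rfl fun i _ => ?_
    rw [Real.volume_Icc]
    ring_nf

theorem planeTube_subset_slab {x ω n : EuclideanSpace ℝ (Fin 2)} (δ : ℝ)
    (hnω : ⟪n, ω⟫ = 0) (hn : ‖n‖ ≤ 1) :
    planeTube x ω δ ⊆ {y | |⟪n, y⟫ - ⟪n, x⟫| ≤ δ} := by
  rintro y ⟨t, -, hy⟩
  have hinner : ⟪n, y⟫ - ⟪n, x⟫ = ⟪n, y - (x + t • ω)⟫ := by
    simp only [inner_sub_right, inner_add_right, inner_smul_right, hnω]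
    ring
  calc |⟪n, y⟫ - ⟪n, x⟫| ≤ ‖n‖ * ‖y - (x + t • ω)‖ := hinner ▸ abs_real_inner_le_norm _ _
    _ ≤ 1 * δ := by
      rw [← dist_eq_norm]
      exact mul_le_mul hn hy dist_nonneg zero_le_one
    _ = δ := one_mul δ

def perp (v : EuclideanSpace ℝ (Fin 2)) : EuclideanSpace ℝ (Fin 2) := !₂[-v 1, v 0]

theorem inner_perp_self (v : EuclideanSpace ℝ (Fin 2)) : ⟪perp v, v⟫ = 0 := by
  simp only [perp, PiLp.inner_apply, RCLike.inner_apply, conj_trivial, Fin.sum_univ_two,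
    Matrix.cons_val_zero, Matrix.cons_val_one, Matrix.cons_val_fin_one]
  ring

theorem norm_perp (v : EuclideanSpace ℝ (Fin 2)) : ‖perp v‖ = ‖v‖ := by
  simp [perp, EuclideanSpace.norm_eq, Fin.sum_univ_two, add_comm]

theorem abs_det_perp_perp (v w : EuclideanSpace ℝ (Fin 2)) :
    |(Matrix.of fun i j => ![perp v, perp w] i j).det| = sin (angle v w) * (‖v‖ * ‖w‖) := by
  rw [sin_angle_mul_norm_mul_norm, ← Real.sqrt_sq_eq_abs]
  congr 1
  simp only [Matrix.det_fin_two, Matrix.of_apply, PiLp.inner_apply, Fin.sum_univ_two,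
    RCLike.inner_apply, conj_trivial, perp, Matrix.cons_val_zero, Matrix.cons_val_one,
    Matrix.cons_val_fin_one]
  ring

theorem inv_sin_le_pi_div_two_mul {θ : ℝ} (hθ : 0 < θ) (hθπ : θ ≤ π / 2) :
    (sin θ)⁻¹ ≤ π / (2 * θ) := by
  have hjordan : 2 / π * θ ≤ sin θ := mul_le_sin hθ.le hθπ
  rw [inv_le_comm₀ ((by positivity : (0 : ℝ) < 2 / π * θ).trans_le hjordan) (by positivity)]
  calc (π / (2 * θ))⁻¹ = 2 / π * θ := by field_simp
    _ ≤ sin θ := hjordan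

theorem tube_intersection_area :
    ∃ C : ℝ, 0 < C ∧
      ∀ (δ θ : ℝ) (x₁ x₂ ω₁ ω₂ : EuclideanSpace ℝ (Fin 2)),
        0 < δ → δ ≤ θ → θ ≤ Real.pi / 2 →
        ‖ω₁‖ = 1 → ‖ω₂‖ = 1 →
        InnerProductGeometry.angle ω₁ ω₂ = θ →
        volume (planeTube x₁ ω₁ δ ∩ planeTube x₂ ω₂ δ) ≤ ENNReal.ofReal (C * δ ^ 2 / θ) := by
  refine ⟨2 * π, by positivity, fun δ θ x₁ x₂ ω₁ ω₂ hδ hδθ hθπ hω₁ hω₂ hangle => ?_⟩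
  have hθ : 0 < θ := hδ.trans_le hδθ
  have hsin : 0 < sin θ := sin_pos_of_pos_of_lt_pi hθ (by linarith [pi_pos])
  set n := ![perp ω₁, perp ω₂]
  have hdet : |(Matrix.of fun i j => n i j).det| = sin θ := by
    rw [abs_det_perp_perp, hω₁, hω₂, hangle, mul_one, mul_one]
  calc volume (planeTube x₁ ω₁ δ ∩ planeTube x₂ ω₂ δ)
      ≤ volume {y | ∀ i, |⟪n i, y⟫ - ![⟪perp ω₁, x₁⟫, ⟪perp ω₂, x₂⟫] i| ≤ δ} :=
      measure_mono fun y ⟨h₁, h₂⟩ => Fin.forall_fin_two.2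
        ⟨planeTube_subset_slab δ (inner_perp_self ω₁) (norm_perp ω₁ ▸ hω₁.le) h₁,
          planeTube_subset_slab δ (inner_perp_self ω₂) (norm_perp ω₂ ▸ hω₂.le) h₂⟩
    _ = ENNReal.ofReal ((sin θ)⁻¹ * (2 * δ) ^ 2) := by
      rw [volume_setOf_abs_inner_sub_le n (by rw [← abs_pos, hdet]; exact hsin) _ fun _ => δ,
        hdet, Fin.prod_univ_two, ← ENNReal.ofReal_mul (by positivity),
        ← ENNReal.ofReal_mul (by positivity), sq]
    _ ≤ ENNReal.ofReal (π / (2 * θ) * (2 * δ) ^ 2) :=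
      ENNReal.ofReal_le_ofReal (by gcongr; exact inv_sin_le_pi_div_two_mul hθ hθπ)
    _ = ENNReal.ofReal (2 * π * δ ^ 2 / θ) := by
      congr 1
      field_simp
end
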